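/- The functions m_λ(ξ|a), as λ ranges over all partitions, form a basis of the ring of symmetric functions Λ_R(ξ) as a module over R = Z[a_1, a_2, ...]; indeed the change of basis from {m_λ(ξ)} to {m_λ(ξ|a)} is unitriangular with respect to degree (m_λ(ξ|a) = m_λ(ξ) plus terms m_α(ξ) with |α| < |λ| and coefficients in R). -/

import Mathlib

open MvPolynomial

/-- `ℤ[a_1, a_2, …]`: the variable `X t` is `a_{t+1}`. -/
abbrev ARing : Type := MvPolynomial ℕ ℤ

/-- The parameters `a_t`, with `a_0 = 0`. -/
noncomputable def aval (t : ℕ) : ARing :=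
  if t = 0 then 0 else MvPolynomial.X (t - 1)

/-- The monomial symmetric polynomial `m_λ(ξ)` in `ξ_1, …, ξ_r`. -/
noncomputable def msym {r : ℕ} (l : Fin r → ℕ) : MvPolynomial (Fin r) ARing :=
  ∑ β ∈ Finset.image (fun σ : Equiv.Perm (Fin r) => l ∘ σ) Finset.univ,
    ∏ i, MvPolynomial.X i ^ β i

/-- The double monomial symmetric polynomial `m_λ(ξ|a)`: the symmetrization (sum over
distinct terms) of `∏_i (ξ_i + a_0)(ξ_i + a_1)⋯(ξ_i + a_{λ_i − 1})` with `a_0 = 0`. -/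
noncomputable def dmsym {r : ℕ} (l : Fin r → ℕ) : MvPolynomial (Fin r) ARing :=
  (Finset.image
    (fun σ : Equiv.Perm (Fin r) =>
      ∏ i, ∏ t ∈ Finset.range (l i), (MvPolynomial.X (σ i) + MvPolynomial.C (aval t)))
    Finset.univ).sum id

/-! Write `(ξ|a)^β = ∏_j (ξ_j + a_0)(ξ_j + a_1)⋯(ξ_j + a_{β_j - 1})`. Then `m_λ(ξ|a)` is the sum of
`(ξ|a)^β` over the rearrangements `β` of `λ`, and `(ξ|a)^β − ξ^β` only has monomials of degree
`< |β|`. Hence `m_λ(ξ|a) − m_λ(ξ)` is a symmetric polynomial of degree `< |λ|`, and expanding it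
in the `m_μ(ξ)` gives the unitriangularity. For partitions with `|ν| ≤ |μ|` it follows that the
coefficient of `ξ^μ` in `m_ν(ξ|a)` is `δ_{μν}`, which gives linear independence; spanning follows
by induction on the degree. -/

section PermOrbit

variable {α : Type*} {r : ℕ}

section DecidableEq

variable [DecidableEq α]

def permOrbit (l : Fin r → α) : Finset (Fin r → α) :=
  Finset.univ.image fun σ : Equiv.Perm (Fin r) => l ∘ σ

theorem mem_permOrbit {l g : Fin r → α} :
    g ∈ permOrbit l ↔ ∃ σ : Equiv.Perm (Fin r), l ∘ σ = g := by
  simp [permOrbit]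

theorem comp_mem_permOrbit (l : Fin r → α) (σ : Equiv.Perm (Fin r)) : l ∘ σ ∈ permOrbit l :=
  mem_permOrbit.2 ⟨σ, rfl⟩

theorem self_mem_permOrbit (l : Fin r → α) : l ∈ permOrbit l :=
  comp_mem_permOrbit l 1

theorem mem_permOrbit_comm {l g : Fin r → α} : g ∈ permOrbit l ↔ l ∈ permOrbit g := by
  suffices ∀ {l g : Fin r → α}, g ∈ permOrbit l → l ∈ permOrbit g from ⟨this, this⟩
  intro l g h
  obtain ⟨σ, rfl⟩ := mem_permOrbit.1 h
  exact mem_permOrbit.2 ⟨σ⁻¹, by ext; simp⟩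

theorem mem_permOrbit_trans {l g h : Fin r → α} (hgh : h ∈ permOrbit g) (hlg : g ∈ permOrbit l) :
    h ∈ permOrbit l := by
  obtain ⟨σ, rfl⟩ := mem_permOrbit.1 hgh
  obtain ⟨τ, rfl⟩ := mem_permOrbit.1 hlg
  exact comp_mem_permOrbit l (τ * σ)

theorem image_comp_permOrbit (l : Fin r → α) (τ : Equiv.Perm (Fin r)) :
    (permOrbit l).image (· ∘ τ) = permOrbit l := by
  have : (· ∘ τ) ∘ (fun σ : Equiv.Perm (Fin r) => l ∘ σ) =
      (fun σ : Equiv.Perm (Fin r) => l ∘ σ) ∘ Equiv.mulRight τ := rfl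
  rw [permOrbit, Finset.image_image, this, ← Finset.image_image, Finset.image_univ_equiv]

theorem sum_eq_of_mem_permOrbit [AddCommMonoid α] {l g : Fin r → α} (h : g ∈ permOrbit l) :
    ∑ i, g i = ∑ i, l i := by
  obtain ⟨σ, rfl⟩ := mem_permOrbit.1 h
  exact Equiv.sum_comp σ l

end DecidableEq

section LinearOrder

variable [LinearOrder α]

noncomputable def sortDesc (l : Fin r → α) : Fin r → α :=
  l ∘ Tuple.sort (OrderDual.toDual ∘ l)

theorem sortDesc_mem_permOrbit (l : Fin r → α) : sortDesc l ∈ permOrbit l :=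
  comp_mem_permOrbit l _

theorem antitone_sortDesc (l : Fin r → α) : Antitone (sortDesc l) :=
  Tuple.monotone_sort (OrderDual.toDual ∘ l)

theorem eq_sortDesc_of_mem_permOrbit {l g : Fin r → α} (hg : Antitone g) (h : g ∈ permOrbit l) :
    g = sortDesc l := by
  obtain ⟨σ, rfl⟩ := mem_permOrbit.1 h
  exact Tuple.unique_monotone (f := OrderDual.toDual ∘ l) hg.dual_right (Tuple.monotone_sort _)

theorem mem_permOrbit_iff_eq_of_antitone {l g : Fin r → α} (hl : Antitone l) (hg : Antitone g) :
    g ∈ permOrbit l ↔ g = l := by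
  refine ⟨fun h => ?_, fun h => h ▸ self_mem_permOrbit g⟩
  rw [eq_sortDesc_of_mem_permOrbit hg h, ← eq_sortDesc_of_mem_permOrbit hl (self_mem_permOrbit l)]

theorem mem_permOrbit_iff_sortDesc_eq {μ g : Fin r → α} (hμ : Antitone μ) :
    g ∈ permOrbit μ ↔ sortDesc g = μ := by
  refine ⟨fun h => ?_, fun h => mem_permOrbit_comm.1 (h ▸ sortDesc_mem_permOrbit g)⟩
  exact (mem_permOrbit_iff_eq_of_antitone hμ (antitone_sortDesc g)).1
    (mem_permOrbit_trans (sortDesc_mem_permOrbit g) h)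

end LinearOrder

end PermOrbit

section Monomial

variable {σ R : Type*} [CommSemiring R]

theorem prod_X_pow_eq_monomial_equivFunOnFinite [Fintype σ] (β : σ → ℕ) :
    ∏ i, X i ^ β i = monomial (Finsupp.equivFunOnFinite.symm β) (1 : R) := by
  rw [monomial_eq, C_1, one_mul, Finsupp.prod_fintype _ _ fun _ => pow_zero _]
  rfl

theorem rename_monomial_equivFunOnFinite [Fintype σ] (τ : Equiv.Perm σ) (β : σ → ℕ) :
    rename τ (monomial (Finsupp.equivFunOnFinite.symm β) (1 : R)) =
      monomial (Finsupp.equivFunOnFinite.symm (β ∘ τ.symm)) 1 := by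
  rw [rename_monomial]
  exact congrArg (monomial · 1) (Finsupp.ext fun i => Finsupp.mapDomain_equiv_apply (f := τ) _ i)

theorem MvPolynomial.IsSymmetric.coeff_mapDomain {p : MvPolynomial σ R} (hp : p.IsSymmetric)
    (τ : Equiv.Perm σ) (d : σ →₀ ℕ) : coeff (d.mapDomain τ) p = coeff d p := by
  conv_lhs => rw [← hp τ]
  exact coeff_rename_mapDomain _ τ.injective p d

theorem MvPolynomial.IsSymmetric.coeff_eq_of_mem_permOrbit {r : ℕ} {p : MvPolynomial (Fin r) R}
    (hp : p.IsSymmetric) {d e : Fin r →₀ ℕ} (h : ⇑e ∈ permOrbit ⇑d) : coeff e p = coeff d p := by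
  obtain ⟨τ, hτ⟩ := mem_permOrbit.1 h
  have : e = d.mapDomain τ.symm := by
    ext i
    rw [Finsupp.mapDomain_equiv_apply, Equiv.symm_symm, ← hτ]
    rfl
  rw [this, hp.coeff_mapDomain]

theorem isSymmetric_sum_permOrbit {r : ℕ} {α : Type*} [DecidableEq α] (l : Fin r → α)
    (H : (Fin r → α) → MvPolynomial (Fin r) R)
    (hH : ∀ (τ : Equiv.Perm (Fin r)) β, rename τ (H β) = H (β ∘ τ.symm)) :
    (∑ β ∈ permOrbit l, H β).IsSymmetric := by
  intro τ
  have hinj : Set.InjOn (· ∘ τ.symm) (permOrbit l : Set (Fin r → α)) :=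
    fun x _ y _ h => funext fun i => by simpa using congrFun h (τ i)
  rw [map_sum]
  simp only [hH]
  rw [← Finset.sum_image (g := (· ∘ τ.symm)) hinj, image_comp_permOrbit]

end Monomial

section TotalDegreeLT

variable {σ R : Type*}

section CommSemiring

variable [CommSemiring R]

variable (σ R) in
noncomputable def totalDegreeLT (n : ℕ) : Submodule R (MvPolynomial σ R) :=
  restrictSupport R {d | d.degree < n}

theorem coeff_eq_zero_of_mem_totalDegreeLT {n : ℕ} {p : MvPolynomial σ R}
    (hp : p ∈ totalDegreeLT σ R n) {d : σ →₀ ℕ} (hd : n ≤ d.degree) : coeff d p = 0 :=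
  notMem_support_iff.1 fun h => (hd.trans_lt (hp h)).false

theorem mem_totalDegreeLT_totalDegree_add_one (p : MvPolynomial σ R) :
    p ∈ totalDegreeLT σ R (p.totalDegree + 1) :=
  fun _ hd => Nat.lt_succ_of_le (le_totalDegree hd)

theorem totalDegreeLT_le_restrictTotalDegree (n : ℕ) :
    totalDegreeLT σ R n ≤ restrictTotalDegree σ R n :=
  restrictSupport_mono R fun d hd => le_of_lt (show d.degree < n from hd)

theorem mul_mem_totalDegreeLT {m n : ℕ} {p q : MvPolynomial σ R} (hp : p ∈ totalDegreeLT σ R m)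
    (hq : q ∈ restrictTotalDegree σ R n) : p * q ∈ totalDegreeLT σ R (m + n) := by
  refine restrictSupport_mono R ?_ (restrictSupport_add R _ _ ▸ Submodule.mul_mem_mul hp hq)
  rintro _ ⟨d, hd, e, he, rfl⟩
  exact (map_add Finsupp.degree d e).trans_lt (Nat.add_lt_add_of_lt_of_le hd he)

theorem X_pow_mem_restrictTotalDegree (j : σ) (k : ℕ) :
    (X j ^ k : MvPolynomial σ R) ∈ restrictTotalDegree σ R k := by
  rw [X_pow_eq_monomial]
  exact (monomial_mem_restrictSupport R).2 (Or.inl (show (Finsupp.single j k).degree ≤ k by simp))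

end CommSemiring

section CommRing

variable [CommRing R]

theorem mul_sub_mul_mem_totalDegreeLT {m n : ℕ} {p p' q q' : MvPolynomial σ R}
    (hp : p - p' ∈ totalDegreeLT σ R m) (hp' : p' ∈ restrictTotalDegree σ R m)
    (hq : q - q' ∈ totalDegreeLT σ R n) (hq' : q' ∈ restrictTotalDegree σ R n) :
    p * q - p' * q' ∈ totalDegreeLT σ R (m + n) := by
  have hq_le : q ∈ restrictTotalDegree σ R n := by
    simpa using add_mem (totalDegreeLT_le_restrictTotalDegree n hq) hq'
  rw [show p * q - p' * q' = (p - p') * q + (q - q') * p' by ring]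
  exact add_mem (mul_mem_totalDegreeLT hp hq_le) (add_comm m n ▸ mul_mem_totalDegreeLT hq hp')

theorem prod_sub_prod_mem_totalDegreeLT {ι : Type*} (s : Finset ι) (f g : ι → MvPolynomial σ R)
    (n : ι → ℕ) (hfg : ∀ i ∈ s, f i - g i ∈ totalDegreeLT σ R (n i))
    (hg : ∀ i ∈ s, g i ∈ restrictTotalDegree σ R (n i)) :
    ∏ i ∈ s, f i - ∏ i ∈ s, g i ∈ totalDegreeLT σ R (∑ i ∈ s, n i) := by
  classical
  induction s using Finset.induction_on with
  | empty => simp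
  | insert a s ha ih =>
    simp only [Finset.prod_insert ha, Finset.sum_insert ha]
    refine mul_sub_mul_mem_totalDegreeLT (hfg a (s.mem_insert_self a)) (hg a (s.mem_insert_self a))
      (ih (fun i hi => hfg i (Finset.mem_insert_of_mem hi))
        (fun i hi => hg i (Finset.mem_insert_of_mem hi))) ?_
    rw [mem_restrictTotalDegree]
    refine (totalDegree_finsetProd s g).trans (Finset.sum_le_sum fun i hi => ?_)
    exact (mem_restrictTotalDegree σ _ _).1 (hg i (Finset.mem_insert_of_mem hi))

theorem prod_X_add_C_sub_X_pow_mem_totalDegreeLT (j : σ) (c : ℕ → R)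
    (k : ℕ) : ∏ t ∈ Finset.range k, (X j + C (c t)) - X j ^ k ∈ totalDegreeLT σ R k := by
  have hC (t : ℕ) : X j + C (c t) - X j ∈ totalDegreeLT σ R 1 := by
    rw [add_sub_cancel_left, C_apply]
    exact (monomial_mem_restrictSupport R).2 (Or.inl (show (0 : σ →₀ ℕ).degree < 1 by simp))
  have h := prod_sub_prod_mem_totalDegreeLT (Finset.range k) (fun t => X j + C (c t))
    (fun _ => X j) (fun _ => 1) (fun t _ => hC t)
    (fun _ _ => pow_one (X j : MvPolynomial σ R) ▸ X_pow_mem_restrictTotalDegree j 1)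
  rwa [Finset.prod_const, Finset.sum_const, Finset.card_range, smul_eq_mul, mul_one] at h

end CommRing

end TotalDegreeLT

theorem linearIndependent_of_triangular {ι κ R M : Type*} [LinearOrder κ] [Ring R]
    [AddCommGroup M] [Module R M] (v : ι → M) (c : ι → M →ₗ[R] R) (deg : ι → κ)
    (hdiag : ∀ i, c i (v i) = 1) (hlower : ∀ i j, j ≠ i → deg j ≤ deg i → c i (v j) = 0) :
    LinearIndependent R v := by
  rw [linearIndependent_iff]
  intro a ha
  by_contra hne
  obtain ⟨i, hi, hmax⟩ := a.support.exists_max_image deg (Finsupp.support_nonempty_iff.2 hne)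
  have := congrArg (c i) ha
  rw [Finsupp.linearCombination_apply, Finsupp.sum, map_sum, map_zero,
    Finset.sum_eq_single_of_mem i hi fun j hj hji => by
      rw [map_smul, hlower i j hji (hmax j hj), smul_zero]] at this
  rw [map_smul, hdiag, smul_eq_mul, mul_one] at this
  exact Finsupp.mem_support_iff.1 hi this

section DoubleMonomial

variable {r : ℕ}

theorem msym_eq_sum_monomial (l : Fin r → ℕ) :
    msym l = ∑ β ∈ permOrbit l, monomial (Finsupp.equivFunOnFinite.symm β) 1 :=
  Finset.sum_congr rfl fun β _ => prod_X_pow_eq_monomial_equivFunOnFinite β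

theorem coeff_msym (l : Fin r → ℕ) (d : Fin r →₀ ℕ) :
    coeff d (msym l) = if ⇑d ∈ permOrbit l then 1 else 0 := by
  simp only [msym_eq_sum_monomial, coeff_sum, coeff_monomial, Equiv.symm_apply_eq]
  exact Finset.sum_ite_eq' (permOrbit l) (⇑d) fun _ => (1 : ARing)

theorem isSymmetric_msym (l : Fin r → ℕ) : (msym l).IsSymmetric := by
  rw [msym_eq_sum_monomial]
  exact isSymmetric_sum_permOrbit l _ rename_monomial_equivFunOnFinite

noncomputable def factorialMonomial (β : Fin r → ℕ) : MvPolynomial (Fin r) ARing :=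
  ∏ j, ∏ t ∈ Finset.range (β j), (X j + C (aval t))

theorem rename_factorialMonomial (τ : Equiv.Perm (Fin r)) (β : Fin r → ℕ) :
    rename τ (factorialMonomial β) = factorialMonomial (β ∘ τ.symm) := by
  simp only [factorialMonomial, map_prod, map_add, rename_X, rename_C]
  exact Fintype.prod_equiv τ _ _ fun i => by simp

theorem map_constantCoeff_factorialMonomial (β : Fin r → ℕ) :
    map constantCoeff (factorialMonomial β) = monomial (Finsupp.equivFunOnFinite.symm β) 1 := by
  have hval (t : ℕ) : constantCoeff (aval t) = 0 := by unfold aval; split_ifs <;> simp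
  simp only [factorialMonomial, map_prod, map_add, map_X, map_C, hval, map_zero, add_zero,
    Finset.prod_const, Finset.card_range]
  exact prod_X_pow_eq_monomial_equivFunOnFinite β

theorem factorialMonomial_injective : Function.Injective (factorialMonomial (r := r)) := by
  intro β γ h
  have := congrArg (map constantCoeff) h
  simp only [map_constantCoeff_factorialMonomial] at this
  exact Finsupp.equivFunOnFinite.symm.injective (monomial_left_injective one_ne_zero this)

theorem dmsym_eq_sum_factorialMonomial (l : Fin r → ℕ) :
    dmsym l = ∑ β ∈ permOrbit l, factorialMonomial β := by
  have hterm (σ : Equiv.Perm (Fin r)) :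
      ∏ i, ∏ t ∈ Finset.range (l i), (X (σ i) + C (aval t)) = factorialMonomial (l ∘ σ.symm) := by
    simpa [factorialMonomial] using rename_factorialMonomial σ l
  have himage : Finset.univ.image (fun σ : Equiv.Perm (Fin r) =>
      ∏ i, ∏ t ∈ Finset.range (l i), (X (σ i) + C (aval t))) =
      (permOrbit l).image factorialMonomial := by
    have : (fun σ : Equiv.Perm (Fin r) => factorialMonomial (l ∘ σ.symm)) =
        (factorialMonomial ∘ fun σ : Equiv.Perm (Fin r) => l ∘ σ) ∘ Equiv.inv _ := rfl
    simp only [hterm, this, permOrbit, Finset.image_image]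
    rw [← Finset.image_image, Finset.image_univ_equiv]
  rw [dmsym, himage, Finset.sum_image fun _ _ _ _ h => factorialMonomial_injective h]
  rfl

theorem isSymmetric_dmsym (l : Fin r → ℕ) : (dmsym l).IsSymmetric := by
  rw [dmsym_eq_sum_factorialMonomial]
  exact isSymmetric_sum_permOrbit l _ rename_factorialMonomial

theorem factorialMonomial_sub_monomial_mem_totalDegreeLT (β : Fin r → ℕ) :
    factorialMonomial β - monomial (Finsupp.equivFunOnFinite.symm β) 1 ∈
      totalDegreeLT (Fin r) ARing (∑ j, β j) := by
  rw [← prod_X_pow_eq_monomial_equivFunOnFinite]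
  exact prod_sub_prod_mem_totalDegreeLT _ _ _ _
    (fun j _ => prod_X_add_C_sub_X_pow_mem_totalDegreeLT j aval (β j))
    (fun j _ => X_pow_mem_restrictTotalDegree j (β j))

theorem dmsym_sub_msym_mem_totalDegreeLT (l : Fin r → ℕ) :
    dmsym l - msym l ∈ totalDegreeLT (Fin r) ARing (∑ i, l i) := by
  rw [dmsym_eq_sum_factorialMonomial, msym_eq_sum_monomial, ← Finset.sum_sub_distrib]
  refine Submodule.sum_mem _ fun β hβ => ?_
  simpa only [sum_eq_of_mem_permOrbit hβ] using factorialMonomial_sub_monomial_mem_totalDegreeLT β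

open Classical in
theorem MvPolynomial.IsSymmetric.eq_sum_msym {p : MvPolynomial (Fin r) ARing}
    (hp : p.IsSymmetric) :
    p = ∑ d ∈ p.support.filter fun d : Fin r →₀ ℕ => Antitone (d : Fin r → ℕ),
      coeff d p • msym ⇑d := by
  refine MvPolynomial.ext _ _ fun e => ?_
  set e' : Fin r →₀ ℕ := Finsupp.equivFunOnFinite.symm (sortDesc ⇑e)
  have he' : coeff e' p = coeff e p :=
    hp.coeff_eq_of_mem_permOrbit (sortDesc_mem_permOrbit (⇑e))
  have hcoeff (d : Fin r →₀ ℕ) (hd : Antitone ⇑d) :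
      coeff e (msym ⇑d) = if d = e' then 1 else 0 := by
    rw [coeff_msym]
    refine if_congr ((mem_permOrbit_iff_sortDesc_eq hd).trans ?_) rfl rfl
    exact eq_comm.trans (Equiv.eq_symm_apply Finsupp.equivFunOnFinite).symm
  rw [coeff_sum, Finset.sum_congr rfl fun d hd => by
    rw [coeff_smul, hcoeff d (Finset.mem_filter.1 hd).2, smul_eq_mul, mul_ite, mul_one, mul_zero],
    Finset.sum_ite_eq', ← he']
  split_ifs with h
  · rfl
  · exact notMem_support_iff.1 fun hs => h (Finset.mem_filter.2 ⟨hs, antitone_sortDesc _⟩)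

variable (r) in
noncomputable def msymSpanLT (n : ℕ) : Submodule ARing (MvPolynomial (Fin r) ARing) :=
  Submodule.span ARing {q | ∃ μ : Fin r → ℕ, Antitone μ ∧ ∑ i, μ i < n ∧ q = msym μ}

theorem MvPolynomial.IsSymmetric.mem_msymSpanLT {n : ℕ} {p : MvPolynomial (Fin r) ARing}
    (hp : p.IsSymmetric) (hn : p ∈ totalDegreeLT (Fin r) ARing n) : p ∈ msymSpanLT r n := by
  rw [hp.eq_sum_msym]
  refine Submodule.sum_mem _ fun d hd => Submodule.smul_mem _ _ (Submodule.subset_span ?_)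
  obtain ⟨hsupp, hanti⟩ := Finset.mem_filter.1 hd
  exact ⟨d, hanti, Finsupp.degree_eq_sum d ▸ hn hsupp, rfl⟩

theorem dmsym_sub_msym_mem_msymSpanLT (l : Fin r → ℕ) :
    dmsym l - msym l ∈ msymSpanLT r (∑ i, l i) :=
  ((isSymmetric_dmsym l).sub (isSymmetric_msym l)).mem_msymSpanLT
    (dmsym_sub_msym_mem_totalDegreeLT l)

theorem coeff_dmsym_of_antitone {μ ν : Fin r → ℕ} (hμ : Antitone μ) (hν : Antitone ν)
    (hle : ∑ i, ν i ≤ ∑ i, μ i) :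
    coeff (Finsupp.equivFunOnFinite.symm μ) (dmsym ν) = if μ = ν then 1 else 0 := by
  have hlow := coeff_eq_zero_of_mem_totalDegreeLT (dmsym_sub_msym_mem_totalDegreeLT ν)
    (d := Finsupp.equivFunOnFinite.symm μ) (by rwa [Finsupp.degree_eq_sum])
  rw [coeff_sub, sub_eq_zero, coeff_msym] at hlow
  rw [hlow]
  exact if_congr (mem_permOrbit_iff_eq_of_antitone hν hμ) rfl rfl

theorem linearIndependent_dmsym :
    LinearIndependent ARing fun μ : {μ : Fin r → ℕ // Antitone μ} => dmsym μ.1 :=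
  linearIndependent_of_triangular _ (fun μ => lcoeff ARing (Finsupp.equivFunOnFinite.symm μ.1))
    (fun μ => ∑ i, μ.1 i) (fun μ => by simp [coeff_dmsym_of_antitone μ.2 μ.2 le_rfl])
    fun μ ν hne hle => by
      rw [lcoeff_apply, coeff_dmsym_of_antitone μ.2 ν.2 hle,
        if_neg fun h => hne (Subtype.ext h.symm)]

theorem msymSpanLT_le_span_dmsym (n : ℕ) :
    msymSpanLT r n ≤ Submodule.span ARing
      (Set.range fun μ : {μ : Fin r → ℕ // Antitone μ} => dmsym μ.1) := by
  induction n using Nat.strong_induction_on with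
  | _ n ih =>
    rw [msymSpanLT, Submodule.span_le]
    rintro _ ⟨μ, hμ, hlt, rfl⟩
    rw [SetLike.mem_coe, ← sub_sub_cancel (dmsym μ) (msym μ)]
    exact sub_mem (Submodule.subset_span ⟨⟨μ, hμ⟩, rfl⟩)
      (ih _ hlt (dmsym_sub_msym_mem_msymSpanLT μ))

theorem MvPolynomial.IsSymmetric.mem_span_dmsym {p : MvPolynomial (Fin r) ARing}
    (hp : p.IsSymmetric) : p ∈ Submodule.span ARing
      (Set.range fun μ : {μ : Fin r → ℕ // Antitone μ} => dmsym μ.1) :=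
  msymSpanLT_le_span_dmsym _ (hp.mem_msymSpanLT (mem_totalDegreeLT_totalDegree_add_one p))

end DoubleMonomial

/-- The functions `m_λ(ξ|a)` are related to the `m_λ(ξ)` by a unitriangular (with
respect to degree) change of basis, and they form a basis, over `R = ℤ[a]`, of the
`R`-module of symmetric polynomials in `ξ_1, …, ξ_r`, indexed by partitions with at
most `r` parts. -/
theorem double_monomial_basis (r : ℕ) :
    (∀ l : Fin r → ℕ, (∀ i j : Fin r, i ≤ j → l j ≤ l i) →
      dmsym l - msym l ∈ Submodule.span ARing
        {q : MvPolynomial (Fin r) ARing | ∃ μ : Fin r → ℕ,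
          (∀ i j : Fin r, i ≤ j → μ j ≤ μ i) ∧ (∑ i, μ i) < (∑ i, l i) ∧ q = msym μ}) ∧
    ∃ B : Module.Basis {l : Fin r → ℕ // ∀ i j : Fin r, i ≤ j → l j ≤ l i} ARing
        (MvPolynomial.symmetricSubalgebra (Fin r) ARing),
      ∀ p, (B p : MvPolynomial (Fin r) ARing) = dmsym p.1 := by
  refine ⟨fun l _ => dmsym_sub_msym_mem_msymSpanLT l, ?_⟩
  let incl := (symmetricSubalgebra (Fin r) ARing).val.toLinearMap
  let v (μ : {μ : Fin r → ℕ // Antitone μ}) : symmetricSubalgebra (Fin r) ARing :=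
    ⟨dmsym μ.1, isSymmetric_dmsym μ.1⟩
  have hli : LinearIndependent ARing v := linearIndependent_dmsym.of_comp incl
  have hspan : ⊤ ≤ Submodule.span ARing (Set.range v) := fun p _ => by
    rw [← Submodule.apply_mem_span_image_iff_mem_span (f := incl) Subtype.val_injective,
      ← Set.range_comp]
    exact p.2.mem_span_dmsym
  exact ⟨.mk hli hspan, fun μ => congrArg Subtype.val (Module.Basis.mk_apply hli hspan μ)⟩
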